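/- arXiv:2405.01000 — 2 statements merged into one kernel-verified Lean document; each statement's English description precedes it below -/
import Mathlib

section
/- Let α ∈ (0, π/4], let N ≥ 2, and let θ₁,…,θ_N be pairwise distinct real numbers in [π/2−α, π/2+α]. Let d̂₁,…,d̂_N be positive reals, let φ, φℓ ∈ [π/2−α, π/2+α] with φ ≠ φℓ, and let β > 0 satisfy β·sin(α)·sin(2α) < π. Define F(ψ) = Σ_{n=1}^{N} exp(i·β·sin((φℓ−ψ)/2)·sin(θₙ−(φℓ+ψ)/2)) / d̂ₙ. Then |F(φ)| < F(φℓ) = Σ_{n=1}^{N} 1/d̂ₙ. In particular, within the sector [π/2−α, π/2+α], the modulus of F attains its maximum uniquely at φ = φℓ. -/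
open Complex Real

/-!
Write `F φ = ∑ₙ d̂ₙ⁻¹ • exp (i xₙ)`. Since `φ ≠ φℓ`, the common factor `β sin ((φℓ - φ)/2)` of the
phases `xₙ` is nonzero, and `sin` is injective on `[-π/2, π/2] ⊇ [-2α, 2α]`, so distinct antenna
angles give distinct phases. The grating-lobe condition bounds the difference of two phases by
`2 β sin α sin 2α < 2π`, so distinct phases give distinct unit vectors `exp (i xₙ)`. Strict
convexity of `ℂ` then makes the triangle inequality `‖F φ‖ ≤ ∑ₙ d̂ₙ⁻¹` strict.
-/

lemma norm_sum_smul_lt_sum_of_strictConvexSpace {ι V : Type*} [NormedAddCommGroup V]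
    [NormedSpace ℝ V] [StrictConvexSpace ℝ V] {t : Finset ι} {w : ι → ℝ} {z : ι → V}
    (hw : ∀ k ∈ t, 0 < w k) {i j : ι} (hi : i ∈ t) (hj : j ∈ t) (hij : z i ≠ z j)
    (hz : ∀ k ∈ t, ‖z k‖ ≤ 1) :
    ‖∑ k ∈ t, w k • z k‖ < ∑ k ∈ t, w k := by
  have hW : 0 < ∑ k ∈ t, w k := Finset.sum_pos hw ⟨i, hi⟩
  have hnormalized : ‖∑ k ∈ t, (w k / ∑ l ∈ t, w l) • z k‖ < 1 :=
    norm_sum_lt_of_strictConvexSpace (fun k hk => (div_pos (hw k hk) hW).le)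
      (by rw [← Finset.sum_div, div_self hW.ne']) hi hj hij
      (div_pos (hw i hi) hW).ne' (div_pos (hw j hj) hW).ne' hz
  simp_rw [div_eq_inv_mul, mul_smul, ← Finset.smul_sum, norm_smul, Real.norm_eq_abs,
    abs_inv, abs_of_pos hW] at hnormalized
  rwa [inv_mul_lt_iff₀ hW, mul_one] at hnormalized

lemma eq_of_exp_I_mul_eq {x y : ℝ} (h : exp (I * x) = exp (I * y)) (hxy : |x - y| < 2 * π) :
    x = y := by
  obtain ⟨n, hn⟩ := Complex.exp_eq_exp_iff_exists_int.1 h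
  have hsub : x = y + n * (2 * π) := by simpa using congrArg Complex.im hn
  have hn0 : n = 0 := by
    rw [hsub, add_sub_cancel_left, abs_mul, abs_of_pos (by positivity : (0 : ℝ) < 2 * π)] at hxy
    have : |(n : ℝ)| < 1 := by nlinarith [pi_pos]
    exact Int.abs_lt_one_iff.mp (by exact_mod_cast this)
  simpa [hn0] using hsub

lemma abs_sin_le_sin_of_abs_le {u a : ℝ} (ha : a ≤ π / 2) (h : |u| ≤ a) :
    |Real.sin u| ≤ Real.sin a := by
  rw [abs_sin_eq_sin_abs_of_abs_le_pi (by linarith [pi_pos])]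
  exact sin_le_sin_of_le_of_le_pi_div_two (by linarith [abs_nonneg u, pi_pos]) ha h

/-- The phase of the summand of `F ψ` belonging to the element at angle `θ`. -/
noncomputable def backprojectionPhase (β φℓ ψ θ : ℝ) : ℝ :=
  β * Real.sin ((φℓ - ψ) / 2) * Real.sin (θ - (φℓ + ψ) / 2)

lemma exp_I_mul_backprojectionPhase_ne {α β φ φℓ θ θ' : ℝ} (hα : α ≤ π / 4) (hβ : 0 < β)
    (hgrating : β * Real.sin α * Real.sin (2 * α) < π)
    (hφ : φ ∈ Set.Icc (π / 2 - α) (π / 2 + α)) (hφℓ : φℓ ∈ Set.Icc (π / 2 - α) (π / 2 + α))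
    (hne : φ ≠ φℓ) (hθ : θ ∈ Set.Icc (π / 2 - α) (π / 2 + α))
    (hθ' : θ' ∈ Set.Icc (π / 2 - α) (π / 2 + α)) (hθθ' : θ ≠ θ') :
    exp (I * backprojectionPhase β φℓ φ θ) ≠ exp (I * backprojectionPhase β φℓ φ θ') := by
  obtain ⟨hφ₁, hφ₂⟩ := hφ
  obtain ⟨hφℓ₁, hφℓ₂⟩ := hφℓ
  have hπ := pi_pos
  set s := Real.sin ((φℓ - φ) / 2)
  set m := (φℓ + φ) / 2 with hm_def
  have hs_ne : s ≠ 0 := by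
    rw [Ne, sin_eq_zero_iff_of_lt_of_lt (by linarith) (by linarith)]
    exact fun h => hne (by linarith)
  have hs_le : |s| ≤ Real.sin α :=
    abs_sin_le_sin_of_abs_le (by linarith) (abs_le.2 ⟨by linarith, by linarith⟩)
  have hm : ∀ u ∈ Set.Icc (π / 2 - α) (π / 2 + α), |u - m| ≤ 2 * α := fun u hu =>
    abs_le.2 ⟨by linarith [hu.1], by linarith [hu.2]⟩
  have hsin_le : ∀ u ∈ Set.Icc (π / 2 - α) (π / 2 + α), |Real.sin (u - m)| ≤ Real.sin (2 * α) :=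
    fun u hu => abs_sin_le_sin_of_abs_le (by linarith) (hm u hu)
  have hsin_ne : Real.sin (θ - m) ≠ Real.sin (θ' - m) := by
    have hmem : ∀ u ∈ Set.Icc (π / 2 - α) (π / 2 + α), u - m ∈ Set.Icc (-(π / 2)) (π / 2) :=
      fun u hu => abs_le.1 ((hm u hu).trans (by linarith))
    exact fun h => hθθ' (by linarith [injOn_sin (hmem θ hθ) (hmem θ' hθ') h])
  have hdiff : |β * s * Real.sin (θ - m) - β * s * Real.sin (θ' - m)| < 2 * π :=
    calc |β * s * Real.sin (θ - m) - β * s * Real.sin (θ' - m)|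
        = β * |s| * |Real.sin (θ - m) - Real.sin (θ' - m)| := by
          rw [← mul_sub, abs_mul, abs_mul, abs_of_pos hβ]
      _ ≤ β * Real.sin α * (2 * Real.sin (2 * α)) := by
          gcongr
          · exact mul_nonneg hβ.le ((abs_nonneg s).trans hs_le)
          · linarith [abs_sub (Real.sin (θ - m)) (Real.sin (θ' - m)), hsin_le θ hθ, hsin_le θ' hθ']
      _ < 2 * π := by linarith
  unfold backprojectionPhase
  exact fun h => hsin_ne (mul_left_cancel₀ (mul_ne_zero hβ.ne' hs_ne) (eq_of_exp_I_mul_eq h hdiff))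

/-- Proposition 1 (uniqueness part): for a sector span `2α` with `α ∈ (0, π/4]`,
pairwise-distinct antenna angles `θₙ ∈ [π/2−α, π/2+α]`, and `β·sin α·sin 2α < π`
(no grating lobes), the sUCA backprojection ambiguity function attains its maximum
modulus uniquely at `φ = φℓ`: for any `φ ≠ φℓ` in the sector, `|F(φ)| < F(φℓ) = Σₙ 1/d̂ₙ`. -/
theorem stmt_1 (α : ℝ) (hα : α ∈ Set.Ioc 0 (Real.pi / 4))
    (N : ℕ) (hN : 2 ≤ N) (θ : Fin N → ℝ) (hθinj : Function.Injective θ)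
    (hθmem : ∀ n, θ n ∈ Set.Icc (Real.pi / 2 - α) (Real.pi / 2 + α))
    (dhat : Fin N → ℝ) (hd : ∀ n, 0 < dhat n)
    (φ φℓ : ℝ) (hφ : φ ∈ Set.Icc (Real.pi / 2 - α) (Real.pi / 2 + α))
    (hφℓ : φℓ ∈ Set.Icc (Real.pi / 2 - α) (Real.pi / 2 + α)) (hne : φ ≠ φℓ)
    (β : ℝ) (hβ : 0 < β) (hgrating : β * Real.sin α * Real.sin (2 * α) < Real.pi)
    (F : ℝ → ℂ)
    (hF : ∀ ψ : ℝ, F ψ = ∑ n : Fin N,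
      Complex.exp (Complex.I * (β * Real.sin ((φℓ - ψ) / 2) *
        Real.sin (θ n - (φℓ + ψ) / 2))) / (dhat n : ℂ)) :
    ‖F φ‖ < ∑ n : Fin N, 1 / dhat n ∧
    F φℓ = ((∑ n : Fin N, 1 / dhat n : ℝ) : ℂ) := by
  obtain ⟨i, j, hij⟩ : ∃ i j : Fin N, i ≠ j := ⟨⟨0, by omega⟩, ⟨1, by omega⟩, by simp⟩
  refine ⟨?_, ?_⟩
  · have hFφ : F φ = ∑ n, (1 / dhat n) • exp (I * backprojectionPhase β φℓ φ (θ n)) := by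
      simp only [hF, backprojectionPhase, Complex.real_smul, div_eq_inv_mul]
      push_cast
      ring_nf
    rw [hFφ]
    exact norm_sum_smul_lt_sum_of_strictConvexSpace (fun n _ => one_div_pos.2 (hd n))
      (Finset.mem_univ i) (Finset.mem_univ j)
      (exp_I_mul_backprojectionPhase_ne hα.2 hβ hgrating hφ hφℓ hne (hθmem i) (hθmem j) (hθinj.ne hij))
      (fun n _ => (norm_exp_I_mul_ofReal _).le)
  · simp [hF]
end

section
/- Let α ∈ (0, π/4), R > 0, λ > 0 with cos(2α) + λ/(2R) ≤ 1, and let N be an integer with N ≥ 1. Then R·(cos(2α − 2α/N) − cos(2α)) ≤ λ/2 if and only if N ≥ 2α / (2α − arccos(λ/(2R) + cos(2α))). (Here λ/(2R) + cos(2α) ∈ (cos 2α, 1], so arccos(λ/(2R) + cos 2α) ∈ [0, 2α) and the right-hand side is a well-defined positive real.) -/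
open Real

/-- Minimum number of antennas (case `α < π/4`): with `cos 2α + λ/(2R) ≤ 1` and
`N ≥ 1`, the condition `R·(cos(2α − 2α/N) − cos 2α) ≤ λ/2` holds if and only if
`N ≥ 2α/(2α − arccos(λ/(2R) + cos 2α))`. -/
theorem stmt_12 (α R lam : ℝ) (hα : α ∈ Set.Ioo 0 (Real.pi / 4)) (hR : 0 < R)
    (hlam : 0 < lam) (hcos : Real.cos (2 * α) + lam / (2 * R) ≤ 1)
    (N : ℤ) (hN : 1 ≤ N) :
    R * (Real.cos (2 * α - 2 * α / (N : ℝ)) - Real.cos (2 * α)) ≤ lam / 2 ↔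
      2 * α / (2 * α - Real.arccos (lam / (2 * R) + Real.cos (2 * α))) ≤ (N : ℝ) := by
  obtain ⟨hα0, hα4⟩ := hα
  have hNpos : (0:ℝ) < (N:ℝ) := by exact_mod_cast hN
  have hN1 : (1:ℝ) ≤ (N:ℝ) := by exact_mod_cast hN
  set c : ℝ := lam / (2 * R) + Real.cos (2 * α) with hc
  have hcgt : Real.cos (2 * α) < c := by
    have h0 : 0 < lam / (2 * R) := by positivity
    rw [hc]; linarith
  have hc1 : c ≤ 1 := by rw [hc]; linarith
  have hcm1 : -1 ≤ c := by
    have := Real.neg_one_le_cos (2 * α)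
    linarith
  set θ := Real.arccos c with hθ
  have hcosθ : Real.cos θ = c := Real.cos_arccos hcm1 hc1
  have h2α0 : 0 < 2 * α := by linarith
  have h2απ : 2 * α ≤ Real.pi := by
    have := Real.pi_pos; linarith
  have hθ0 : 0 ≤ θ := Real.arccos_nonneg c
  have hθπ : θ ≤ Real.pi := Real.arccos_le_pi c
  have hθlt : θ < 2 * α := by
    by_contra h
    push_neg at h
    have := Real.strictAntiOn_cos.antitoneOn ⟨by linarith, h2απ⟩ ⟨hθ0, hθπ⟩ h
    rw [hcosθ] at this
    linarith
  set x : ℝ := 2 * α - 2 * α / (N:ℝ) with hx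
  clear_value x θ c
  have hx0 : 0 ≤ x := by
    have : 2 * α / (N:ℝ) ≤ 2 * α := by
      rw [div_le_iff₀ hNpos]
      nlinarith
    linarith
  have hxlt : x < 2 * α := by
    have : 0 < 2 * α / (N:ℝ) := by positivity
    linarith
  have step1 : R * (Real.cos x - Real.cos (2 * α)) ≤ lam / 2 ↔ Real.cos x ≤ c := by
    rw [hc]
    constructor
    · intro h
      have h2 : Real.cos x - Real.cos (2 * α) ≤ lam / (2 * R) := by
        rw [le_div_iff₀ (by positivity)]
        nlinarith
      linarith
    · intro h
      have h2 : Real.cos x - Real.cos (2 * α) ≤ lam / (2 * R) := by linarith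
      rw [le_div_iff₀ (by positivity)] at h2
      nlinarith
  have step2 : Real.cos x ≤ Real.cos θ ↔ θ ≤ x := by
    constructor
    · intro h
      by_contra hlt
      push_neg at hlt
      have := Real.strictAntiOn_cos ⟨hx0, by linarith⟩ ⟨hθ0, hθπ⟩ hlt
      linarith
    · intro h
      exact Real.strictAntiOn_cos.antitoneOn ⟨hθ0, hθπ⟩ ⟨hx0, by linarith⟩ h
  have hd : 0 < 2 * α - θ := by linarith
  have step3 : θ ≤ x ↔ 2 * α / (2 * α - θ) ≤ (N:ℝ) := by
    rw [hx, div_le_iff₀ hd]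
    constructor
    · intro h
      have h2 : 2 * α / (N:ℝ) ≤ 2 * α - θ := by linarith
      rw [div_le_iff₀ hNpos] at h2
      nlinarith
    · intro h
      have h2 : 2 * α / (N:ℝ) ≤ 2 * α - θ := by
        rw [div_le_iff₀ hNpos]
        nlinarith
      linarith
  rw [step1, ← hcosθ, step2, step3]
end
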